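/- Let Ω be a set, 𝔖 a coat of Ω, p' : 𝔖' → [0,1] a quasi-probability measure of 𝔖, and p⋇ the associated exterior quasi-measure. Suppose moreover that p⋇ restricted to the algebra 𝒜(𝔖) generated by 𝔖 is countably additive on 𝒜(𝔖) (i.e., it is a pre-measure in the σ-additive sense). Then there exists a probability measure p on the σ-algebra σ(𝔖) generated by 𝔖 such that p(X) = p'(X) for every X ∈ 𝔖. -/

import Mathlib

open Set

/-- A family of subsets of `Ω` is a *coat* of `Ω` if it contains `∅` and `Ω`. -/
def IsCoat {Ω : Type*} (S : Set (Set Ω)) : Prop := ∅ ∈ S ∧ Set.univ ∈ S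

/-- The *refinement* of `S`: all sets of the form `X ∩ Y` or `X ∩ Yᶜ` with `X, Y ∈ S`. -/
def refinement {Ω : Type*} (S : Set (Set Ω)) : Set (Set Ω) :=
  {T | ∃ X ∈ S, ∃ Y ∈ S, T = X ∩ Y ∨ T = X ∩ Yᶜ}

/-- `p` is a *quasi-probability measure* of the coat `S` (witnesses in `S`). -/
def IsQuasiMeasure {Ω : Type*} (S : Set (Set Ω)) (p : Set Ω → ℝ) : Prop :=
  (∀ T ∈ refinement S, p T ∈ Set.Icc (0 : ℝ) 1) ∧
  p ∅ = 0 ∧ p Set.univ = 1 ∧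
  (∀ X ∈ S, ∀ Y ∈ S, p X = p (X ∩ Y) + p (X ∩ Yᶜ)) ∧
  (∀ X ∈ S, ∀ Y ∈ S, ∃ W ∈ S, X ∩ Y ⊆ W ∧ p (X ∩ Y) = p W) ∧
  (∀ X ∈ S, ∀ Y ∈ S, ∃ Z ∈ S, X ∩ Yᶜ ⊆ Z ∧ p (X ∩ Yᶜ) = p Z) ∧
  (∀ X ∈ S, ∀ (m : ℕ) (T : Fin m → Set Ω), (∀ n, T n ∈ S) →
      X ⊆ ⋃ n, T n → p X ≤ ∑ n, p (T n))

/-- The *exterior quasi-measure* associated with `p` and the coat `S`. -/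
noncomputable def outerQM {Ω : Type*} (S : Set (Set Ω)) (p : Set Ω → ℝ) (A : Set Ω) : ℝ :=
  sInf {r | ∃ (m : ℕ) (T : Fin m → Set Ω),
    (∀ n, T n ∈ S) ∧ A ⊆ (⋃ n, T n) ∧ r = ∑ n, p (T n)}

/-- The algebra of subsets of `Ω` generated by `S`: the smallest family containing `S`,
`∅` and `univ`, closed under complements and finite unions. -/
def genAlgebra {Ω : Type*} (S : Set (Set Ω)) : Set (Set Ω) :=
  ⋂₀ {A | S ⊆ A ∧ ∅ ∈ A ∧ Set.univ ∈ A ∧ (∀ W ∈ A, Wᶜ ∈ A) ∧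
      ∀ W ∈ A, ∀ Z ∈ A, W ∪ Z ∈ A}

/-!
Countable additivity makes the exterior quasi-measure an additive content on the algebra `𝒜(𝔖)`
that is σ-subadditive, so Carathéodory's extension turns it into a measure on `σ(𝔖)` agreeing
with it on `𝒜(𝔖)`. On `𝔖` itself the exterior quasi-measure is `p'`, since by axiom (v) no finite
cover of `X ∈ 𝔖` by sets of `𝔖` is cheaper than `X` itself; in particular the measure of `Ω` is
`p'(Ω) = 1`.
-/

open MeasureTheory Function
open scoped ENNReal

theorem genAlgebra_eq_generateSetAlgebra {Ω : Type*} (S : Set (Set Ω)) :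
    genAlgebra S = generateSetAlgebra S := by
  refine subset_antisymm (sInter_subset_of_mem ⟨self_subset_generateSetAlgebra,
    isSetAlgebra_generateSetAlgebra.empty_mem, isSetAlgebra_generateSetAlgebra.univ_mem,
    fun _ ↦ generateSetAlgebra.compl _, fun _ hW _ hZ ↦ generateSetAlgebra.union _ _ hW hZ⟩) ?_
  refine IsSetAlgebra.generateSetAlgebra_subset (fun X hX A hA ↦ hA.1 hX)
    ⟨fun A hA ↦ hA.2.1, fun s hs A hA ↦ hA.2.2.2.1 s (hs A hA),
      fun s t hs ht A hA ↦ hA.2.2.2.2 s (hs A hA) t (ht A hA)⟩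

theorem union_eq_add_of_iUnion_eq_tsum {α M : Type*} [AddCommMonoid M] [TopologicalSpace M]
    {C : Set (Set α)} {m : Set α → M} (hC : ∅ ∈ C) (m_empty : m ∅ = 0)
    (m_iUnion : ∀ f : ℕ → Set α, (∀ i, f i ∈ C) → (⋃ i, f i) ∈ C →
      Pairwise (Disjoint on f) → m (⋃ i, f i) = ∑' i, m (f i))
    {s t : Set α} (hs : s ∈ C) (ht : t ∈ C) (hst : s ∪ t ∈ C) (hd : Disjoint s t) :
    m (s ∪ t) = m s + m t := by
  -- `s ∪ t` is a union indexed by `Bool`; encoding `Bool` into `ℕ` pads it with empty sets.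
  rw [union_eq_iUnion, ← Encodable.iUnion_decode₂,
    m_iUnion _
      (fun _ ↦ Encodable.iUnion_decode₂_cases (C := (· ∈ C)) hC (Bool.forall_bool.2 ⟨ht, hs⟩))
      (by rwa [Encodable.iUnion_decode₂, ← union_eq_iUnion])
      (Encodable.iUnion_decode₂_disjoint_on (pairwise_disjoint_on_bool.2 hd)),
    tsum_iUnion_decode₂ m m_empty, tsum_fintype, Fintype.sum_bool, cond_true, cond_false]

theorem ENNReal.ofReal_tsum_le {ι : Type*} {f : ι → ℝ} (hf : ∀ i, 0 ≤ f i) :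
    ENNReal.ofReal (∑' i, f i) ≤ ∑' i, ENNReal.ofReal (f i) := by
  by_cases hs : Summable f
  · exact (ENNReal.ofReal_tsum_of_nonneg hf hs).le
  · simp [tsum_eq_zero_of_not_summable hs]

namespace MeasureTheory.IsSetRing

variable {α : Type*} {C : Set (Set α)} {m : Set α → ℝ}

noncomputable def ofRealAddContent (hC : IsSetRing C) (m_nonneg : ∀ s ∈ C, 0 ≤ m s)
    (m_empty : m ∅ = 0)
    (m_iUnion : ∀ f : ℕ → Set α, (∀ i, f i ∈ C) → (⋃ i, f i) ∈ C →
      Pairwise (Disjoint on f) → m (⋃ i, f i) = ∑' i, m (f i)) :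
    AddContent ℝ≥0∞ C :=
  hC.addContent_of_union (fun s ↦ ENNReal.ofReal (m s)) (by simp [m_empty])
    fun hs ht hd ↦ by
      rw [union_eq_add_of_iUnion_eq_tsum hC.empty_mem m_empty m_iUnion hs ht
        (hC.union_mem hs ht) hd, ENNReal.ofReal_add (m_nonneg _ hs) (m_nonneg _ ht)]

theorem isSigmaSubadditive_ofRealAddContent (hC : IsSetRing C) (m_nonneg : ∀ s ∈ C, 0 ≤ m s)
    (m_empty : m ∅ = 0)
    (m_iUnion : ∀ f : ℕ → Set α, (∀ i, f i ∈ C) → (⋃ i, f i) ∈ C →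
      Pairwise (Disjoint on f) → m (⋃ i, f i) = ∑' i, m (f i)) :
    (hC.ofRealAddContent m_nonneg m_empty m_iUnion).IsSigmaSubadditive := by
  intro f hf hU
  have hdisj : ∀ i, disjointed f i ∈ C := hC.disjointed_mem hf
  calc ENNReal.ofReal (m (⋃ i, f i))
      = ENNReal.ofReal (∑' i, m (disjointed f i)) := by
        rw [← iUnion_disjointed, m_iUnion _ hdisj (by rwa [iUnion_disjointed])
          (disjoint_disjointed f)]
    _ ≤ ∑' i, ENNReal.ofReal (m (disjointed f i)) :=
        ENNReal.ofReal_tsum_le fun i ↦ m_nonneg _ (hdisj i)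
    _ ≤ ∑' i, ENNReal.ofReal (m (f i)) :=
        ENNReal.tsum_le_tsum fun i ↦
          addContent_mono (m := hC.ofRealAddContent m_nonneg m_empty m_iUnion)
            hC.isSetSemiring (hdisj i) (hf i) (disjointed_subset f i)

theorem exists_measure_eq_ofReal [mα : MeasurableSpace α] (hC : IsSetRing C)
    (hC_gen : mα = MeasurableSpace.generateFrom C) (m_nonneg : ∀ s ∈ C, 0 ≤ m s)
    (m_empty : m ∅ = 0)
    (m_iUnion : ∀ f : ℕ → Set α, (∀ i, f i ∈ C) → (⋃ i, f i) ∈ C →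
      Pairwise (Disjoint on f) → m (⋃ i, f i) = ∑' i, m (f i)) :
    ∃ μ : Measure α, ∀ s ∈ C, μ s = ENNReal.ofReal (m s) :=
  ⟨_, fun _ hs ↦ (hC.ofRealAddContent m_nonneg m_empty m_iUnion).measure_eq hC.isSetSemiring
    hC_gen (hC.isSigmaSubadditive_ofRealAddContent m_nonneg m_empty m_iUnion) hs⟩

end MeasureTheory.IsSetRing

section outerQM

variable {Ω : Type*} {S : Set (Set Ω)} {p : Set Ω → ℝ}

theorem IsQuasiMeasure.nonneg (hp : IsQuasiMeasure S p) {X : Set Ω} (hX : X ∈ S) : 0 ≤ p X :=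
  (hp.1 X ⟨X, hX, X, hX, Or.inl (inter_self X).symm⟩).1

theorem outerQM_nonneg (hp : IsQuasiMeasure S p) (A : Set Ω) : 0 ≤ outerQM S p A :=
  Real.sInf_nonneg fun _ ⟨_, _, hT, _, hr⟩ ↦ hr ▸ Finset.sum_nonneg fun n _ ↦ hp.nonneg (hT n)

theorem outerQM_eq_of_mem (hp : IsQuasiMeasure S p) {X : Set Ω} (hX : X ∈ S) :
    outerQM S p X = p X := by
  have hcover : p X ∈ {r | ∃ (m : ℕ) (T : Fin m → Set Ω),
      (∀ n, T n ∈ S) ∧ X ⊆ (⋃ n, T n) ∧ r = ∑ n, p (T n)} :=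
    ⟨1, fun _ ↦ X, fun _ ↦ hX, subset_iUnion (fun _ : Fin 1 ↦ X) 0, by simp⟩
  have hbound : p X ∈ lowerBounds {r | ∃ (m : ℕ) (T : Fin m → Set Ω),
      (∀ n, T n ∈ S) ∧ X ⊆ (⋃ n, T n) ∧ r = ∑ n, p (T n)} :=
    fun _ ⟨m, T, hT, hX_sub, hr⟩ ↦ hr ▸ hp.2.2.2.2.2.2 X hX m T hT hX_sub
  exact le_antisymm (csInf_le ⟨_, hbound⟩ hcover) (le_csInf ⟨_, hcover⟩ hbound)

end outerQM

/-- if the exterior quasi-measure is countably additive on the algebra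
generated by `𝔖`, then there is a probability measure on the σ-algebra generated by `𝔖`
extending the quasi-measure `p'`. -/
theorem exists_probabilityMeasure_extending {Ω : Type*} (S : Set (Set Ω)) (p : Set Ω → ℝ)
    (hS : IsCoat S) (hp : IsQuasiMeasure S p)
    (hadd : ∀ A : ℕ → Set Ω, (∀ n, A n ∈ genAlgebra S) →
      (∀ i j, i ≠ j → Disjoint (A i) (A j)) → (⋃ n, A n) ∈ genAlgebra S →
      outerQM S p (⋃ n, A n) = ∑' n, outerQM S p (A n)) :
    ∃ μ : @MeasureTheory.Measure Ω (MeasurableSpace.generateFrom S),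
      @MeasureTheory.IsProbabilityMeasure Ω (MeasurableSpace.generateFrom S) μ ∧
      ∀ X ∈ S, μ X = ENNReal.ofReal (p X) := by
  let _ : MeasurableSpace Ω := MeasurableSpace.generateFrom S
  rw [genAlgebra_eq_generateSetAlgebra] at hadd
  obtain ⟨μ, hμ⟩ := isSetAlgebra_generateSetAlgebra.isSetRing.exists_measure_eq_ofReal
    generateFrom_generateSetAlgebra_eq.symm (fun A _ ↦ outerQM_nonneg hp A)
    (by rw [outerQM_eq_of_mem hp hS.1, hp.2.1]) fun A hA hU hd ↦ hadd A hA hd hU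
  have hμS : ∀ X ∈ S, μ X = ENNReal.ofReal (p X) := fun X hX ↦ by
    rw [hμ X (self_subset_generateSetAlgebra hX), outerQM_eq_of_mem hp hX]
  exact ⟨μ, ⟨by rw [hμS _ hS.2, hp.2.2.1, ENNReal.ofReal_one]⟩, hμS⟩
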